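/- In the formal power series ring ℚ⟦t⟧, equipped with the topology of coefficientwise convergence (product topology, ℚ discrete), the family indexed by integers k ≥ 1 given by (φ(k)/k) • L_k, where φ is Euler's totient function and L_k ∈ ℚ⟦t⟧ is the series whose coefficient of t^m equals k/m if k divides m and m ≥ 1, and 0 otherwise (i.e. L_k = ∑_{j≥1} t^{kj}/j), has sum (HasSum) equal to the series ∑_{m≥1} t^m = t/(1−t). -/

import Mathlib

/-- The topology of coefficientwise convergence on `ℚ⟦t⟧`
(the product topology, `ℚ` being discrete). -/
noncomputable instance : TopologicalSpace (PowerSeries ℚ) :=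
  TopologicalSpace.induced (fun f k => PowerSeries.coeff k f)
    (@Pi.topologicalSpace ℕ (fun _ => ℚ) fun _ => ⊥)

/-!
Comparing coefficients of `t^m`, only the divisors `k` of `m` contribute, each with
`(φ(k)/k) · (k/m) = φ(k)/m`, and Gauss's identity `∑_{k ∣ m} φ(k) = m` makes the total `1`.
-/

open PowerSeries

/-- Since `ℚ` is discrete, a sum converges coefficientwise once each coefficient is a finite sum. -/
theorem PowerSeries.hasSum_of_forall_coeff_eq_finsetSum {ι : Type*} {f : ι → ℚ⟦X⟧} {g : ℚ⟦X⟧}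
    (h : ∀ m, ∃ s₀ : Finset ι, (∀ i ∉ s₀, coeff m (f i) = 0) ∧
      ∑ i ∈ s₀, coeff m (f i) = coeff m g) :
    HasSum f g := by
  let _ : TopologicalSpace ℚ := ⊥
  have : DiscreteTopology ℚ := ⟨rfl⟩
  rw [HasSum, nhds_induced, Filter.tendsto_comap_iff, tendsto_pi_nhds]
  intro m
  rw [nhds_discrete ℚ, Filter.tendsto_pure]
  obtain ⟨s₀, hzero, hsum⟩ := h m
  filter_upwards [Filter.eventually_ge_atTop s₀] with s hs
  rw [Function.comp_apply, map_sum, ← hsum]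
  exact (Finset.sum_subset hs fun i _ hi => hzero i hi).symm

theorem coeff_totient_div_smul_log (k m : ℕ) :
    coeff m (((Nat.totient k : ℚ) / k) •
        PowerSeries.mk fun n => if n ≠ 0 ∧ k ∣ n then (k : ℚ) / n else 0) =
      if m ≠ 0 ∧ k ∣ m then (Nat.totient k : ℚ) / m else 0 := by
  rw [coeff_smul, coeff_mk, smul_eq_mul]
  split_ifs with hkm
  · rcases Nat.eq_zero_or_pos k with rfl | hk
    · simp
    · field_simp
  · rw [mul_zero]

/-- **Logarithmic form of `∏_{k≥1} (1-t^k)^{-φ(k)/k} = e^{t/(1-t)}`.**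
The family `k ↦ (φ(k)/k) • L_k` (`k ≥ 1`), where `L_k = ∑_{j≥1} t^{kj}/j` is the series
whose coefficient of `t^m` is `k/m` if `k ∣ m`, `m ≥ 1`, and `0` otherwise, has sum
`∑_{m≥1} t^m = t/(1-t)` in `ℚ⟦t⟧`. -/
theorem hasSum_totient_div_smul_log :
    HasSum
      (fun k : {k : ℕ // 1 ≤ k} =>
        ((Nat.totient (k : ℕ) : ℚ) / ((k : ℕ) : ℚ)) •
          (PowerSeries.mk fun m =>
            if m ≠ 0 ∧ (k : ℕ) ∣ m then (((k : ℕ) : ℚ)) / (m : ℚ) else 0))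
      (PowerSeries.mk fun m => if m = 0 then 0 else (1 : ℚ)) := by
  set f : ℕ → ℚ⟦X⟧ := fun k => ((Nat.totient k : ℚ) / k) •
    PowerSeries.mk fun n => if n ≠ 0 ∧ k ∣ n then (k : ℚ) / n else 0
  -- the `k = 0` term vanishes because `φ 0 = 0`
  have hsupp : Function.support f ⊆ {k | 1 ≤ k} := fun k hk => by
    by_contra h0
    obtain rfl : k = 0 := by simpa using h0
    simp [f] at hk
  refine (hasSum_subtype_iff_of_support_subset hsupp).mpr <|
    hasSum_of_forall_coeff_eq_finsetSum fun m => ⟨m.divisors, fun k hk => ?_, ?_⟩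
  · rw [coeff_totient_div_smul_log, if_neg (by simpa [and_comm] using hk)]
  · rcases eq_or_ne m 0 with rfl | hm
    · simp
    have hterm : ∀ k ∈ m.divisors, coeff m (f k) = (Nat.totient k : ℚ) / m := fun k hk => by
      rw [coeff_totient_div_smul_log, if_pos ⟨hm, Nat.dvd_of_mem_divisors hk⟩]
    rw [Finset.sum_congr rfl hterm, ← Finset.sum_div, ← Nat.cast_sum, Nat.sum_totient,
      div_self (Nat.cast_ne_zero.mpr hm), coeff_mk, if_neg hm]
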